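/- In a convex cyclic quadrilateral whose diagonals are perpendicular, the line through the intersection point of the diagonals perpendicular to one side bisects the opposite side. -/

import Mathlib

/-!
With `M` the midpoint of `CD`, `2 (M - J) = (C - J) + (D - J)` and `B - A = (B - J) - (A - J)`.
After expanding, the mixed terms `⟪C - J, B - J⟫` and `⟪D - J, A - J⟫` vanish because the diagonals
are perpendicular, leaving `⟪D - J, B - J⟫ - ⟪C - J, A - J⟫`. Both are signed products of the
segments of a chord through `J`, hence both equal the power of `J` with respect to the circle.
-/

open EuclideanGeometry

namespace EuclideanGeometry

open AffineMap RealInnerProductSpace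

variable {V P : Type*} [NormedAddCommGroup V] [InnerProductSpace ℝ V] [MetricSpace P]
  [NormedAddTorsor V P]

theorem direction_affineSpan_pair_isOrtho {a b c d : P} (h : ⟪b -ᵥ a, d -ᵥ c⟫ = 0) :
    (line[ℝ, a, b]).direction ⟂ (line[ℝ, c, d]).direction := by
  simpa [direction_affineSpan, vectorSpan_pair_rev] using h

theorem Sphere.inner_vsub_vsub_eq_power {s : Sphere P} {a b p : P} (hp : p ∈ line[ℝ, a, b])
    (ha : a ∈ s) (hb : b ∈ s) : ⟪a -ᵥ p, b -ᵥ p⟫ = s.power p := by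
  obtain ⟨t, rfl⟩ := mem_affineSpan_pair_iff_exists_lineMap_eq.1 hp
  have ha' : ‖a -ᵥ s.center‖ ^ 2 = s.radius ^ 2 := by rw [← dist_eq_norm_vsub, mem_sphere.1 ha]
  have hb' : ‖(b -ᵥ a) + (a -ᵥ s.center)‖ ^ 2 = s.radius ^ 2 := by
    rw [vsub_add_vsub_cancel, ← dist_eq_norm_vsub, mem_sphere.1 hb]
  rw [Sphere.power, dist_eq_norm_vsub V, ← vsub_add_vsub_cancel (lineMap a b t) a s.center,
    lineMap_vsub_left, left_vsub_lineMap, right_vsub_lineMap, ← neg_vsub_eq_vsub_rev b a]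
  rw [norm_add_sq_real] at hb'
  simp only [norm_add_sq_real, norm_smul, real_inner_smul_left, real_inner_smul_right,
    inner_neg_left, real_inner_self_eq_norm_sq, Real.norm_eq_abs, mul_pow, sq_abs]
  linear_combination (-t) * hb' + (t - 1) * ha'

theorem Sphere.inner_midpoint_vsub_vsub_eq_zero {s : Sphere P} {a b c d p : P} (ha : a ∈ s)
    (hb : b ∈ s) (hc : c ∈ s) (hd : d ∈ s) (hac : p ∈ line[ℝ, a, c]) (hbd : p ∈ line[ℝ, b, d])
    (hperp : ⟪c -ᵥ a, d -ᵥ b⟫ = 0) : ⟪midpoint ℝ c d -ᵥ p, b -ᵥ a⟫ = 0 := by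
  have hortho := direction_affineSpan_pair_isOrtho hperp
  have hcb : ⟪c -ᵥ p, b -ᵥ p⟫ = 0 :=
    hortho.inner_eq (AffineSubspace.vsub_mem_direction (right_mem_affineSpan_pair _ _ _) hac)
      (AffineSubspace.vsub_mem_direction (left_mem_affineSpan_pair _ _ _) hbd)
  have hda : ⟪d -ᵥ p, a -ᵥ p⟫ = 0 :=
    hortho.symm.inner_eq (AffineSubspace.vsub_mem_direction (right_mem_affineSpan_pair _ _ _) hbd)
      (AffineSubspace.vsub_mem_direction (left_mem_affineSpan_pair _ _ _) hac)
  have hpower : ⟪c -ᵥ p, a -ᵥ p⟫ = ⟪d -ᵥ p, b -ᵥ p⟫ := by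
    rw [real_inner_comm, s.inner_vsub_vsub_eq_power hac ha hc, real_inner_comm,
      s.inner_vsub_vsub_eq_power hbd hb hd]
  rw [midpoint_vsub, ← vsub_sub_vsub_cancel_right b a p]
  simp only [inner_add_left, inner_sub_right, real_inner_smul_left]
  linear_combination (⅟2 : ℝ) * (hcb - hda - hpower)

end EuclideanGeometry

/-- Brahmagupta's theorem (BSS XII.30-31): in a convex cyclic quadrilateral with
    perpendicular diagonals meeting at J, the line through J perpendicular to side AB
    passes through the midpoint of the opposite side CD. -/
theorem brahmagupta_theorem (A B C D O J : EuclideanSpace ℝ (Fin 2)) (r : ℝ)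
    (hA : dist O A = r) (hB : dist O B = r) (hC : dist O C = r) (hD : dist O D = r)
    (hJAC : J ∈ segment ℝ A C) (hJBD : J ∈ segment ℝ B D)
    (hperp : inner ℝ (C - A) (D - B) = (0 : ℝ)) :
    inner ℝ (midpoint ℝ C D - J) (B - A) = (0 : ℝ) := by
  let s : Sphere (EuclideanSpace ℝ (Fin 2)) := ⟨O, r⟩
  have mem_s {X} (hX : dist O X = r) : X ∈ s := mem_sphere.2 ((dist_comm X O).trans hX)
  exact s.inner_midpoint_vsub_vsub_eq_zero (mem_s hA) (mem_s hB) (mem_s hC) (mem_s hD)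
    (mem_segment_iff_wbtw.1 hJAC).mem_affineSpan (mem_segment_iff_wbtw.1 hJBD).mem_affineSpan hperp
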